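/- arXiv:2310.06686 — 4 statements merged into one kernel-verified Lean document; each statement's English description precedes it below -/
import Mathlib

section
/- The partial derivative of an n-variable Wick product with respect to x_i equals the Wick product of the remaining n−1 variables: ∂/∂x_i ε_{X_{[n]}}(x_{[n]}) = ε_{X_{[n]∖{i}}}(x_{[n]∖{i}}) for every i ∈ [n]. -/
open MeasureTheory Finset

/-- The partial derivative of the `n`-variable Wick product with respect to `x i`
is the Wick product of the remaining `n − 1` variables:
`∂/∂xᵢ ε_{X_{[n]}}(x) = ε_{X_{[n]∖{i}}}(x)`. -/
theorem wick_product_partial_deriv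
    {Ω : Type*} [MeasurableSpace Ω] (μ : Measure Ω) [IsProbabilityMeasure μ]
    (n : ℕ) (X : Fin n → Ω → ℝ)
    (hint : ∀ T : Finset (Fin n), Integrable (fun ω => ∏ i ∈ T, X i ω) μ)
    (ε : Finset (Fin n) → (Fin n → ℝ) → ℝ)
    (hε : ∀ (T : Finset (Fin n)) (x : Fin n → ℝ),
      ε T x = (∏ i ∈ T, x i) -
        ∑ S ∈ T.ssubsets, (∫ ω, ∏ i ∈ T \ S, X i ω ∂μ) * ε S x) :
    ∀ (i : Fin n) (x : Fin n → ℝ),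
      HasDerivAt (fun t => ε Finset.univ (Function.update x i t))
        (ε (Finset.univ.erase i) x) (x i) := by
  have key : ∀ T : Finset (Fin n),
      (∀ i ∉ T, ∀ (x : Fin n → ℝ) (t : ℝ),
        ε T (Function.update x i t) = ε T x) ∧
      (∀ i ∈ T, ∀ x : Fin n → ℝ,
        HasDerivAt (fun t => ε T (Function.update x i t)) (ε (T.erase i) x) (x i)) := by
    intro T
    induction T using Finset.strongInduction with
    | _ T ih =>
      refine ⟨?_, ?_⟩
      · intro i hi x t
        rw [hε, hε]
        congr 1
        · exact Finset.prod_congr rfl fun j hj =>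
            Function.update_of_ne (fun h => hi (by rwa [← h])) _ _
        · refine Finset.sum_congr rfl fun S hS => ?_
          rw [Finset.mem_ssubsets] at hS
          rw [(ih S hS).1 i (fun h => hi (hS.subset h)) x t]
      · intro i hi x
        have hfun : (fun t => ε T (Function.update x i t)) =
            fun t => t * (∏ j ∈ T.erase i, x j) -
              ∑ S ∈ T.ssubsets,
                (∫ ω, ∏ j ∈ T \ S, X j ω ∂μ) * ε S (Function.update x i t) := by
          funext t
          rw [hε]
          congr 1
          rw [← Finset.mul_prod_erase T _ hi, Function.update_self]
          congr 1
          exact Finset.prod_congr rfl fun j hj =>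
            Function.update_of_ne (Finset.ne_of_mem_erase hj) _ _
        rw [hfun]
        have hsum : HasDerivAt
            (fun t => ∑ S ∈ T.ssubsets,
              (∫ ω, ∏ j ∈ T \ S, X j ω ∂μ) * ε S (Function.update x i t))
            (∑ S ∈ T.ssubsets,
              if i ∈ S then (∫ ω, ∏ j ∈ T \ S, X j ω ∂μ) * ε (S.erase i) x else 0)
            (x i) := by
          refine HasDerivAt.fun_sum fun S hS => ?_
          rw [Finset.mem_ssubsets] at hS
          by_cases hiS : i ∈ S
          · simp only [hiS, if_true]
            exact ((ih S hS).2 i hiS x).const_mul _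
          · simp only [hiS, if_false]
            have heq : (fun t => (∫ ω, ∏ j ∈ T \ S, X j ω ∂μ) * ε S (Function.update x i t)) =
                fun _ => (∫ ω, ∏ j ∈ T \ S, X j ω ∂μ) * ε S x := by
              funext t; rw [(ih S hS).1 i hiS x t]
            rw [heq]
            exact hasDerivAt_const _ _
        have hD := (hasDerivAt_mul_const (∏ j ∈ T.erase i, x j)).sub hsum
        convert hD using 1
        · rfl
        · rfl
        · rfl
        rw [hε (T.erase i) x]
        congr 1
        rw [← Finset.sum_filter]
        refine Finset.sum_nbij' (fun S' => insert i S') (fun S => S.erase i) ?_ ?_ ?_ ?_ ?_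
        · intro S' hS'
          rw [Finset.mem_ssubsets] at hS'
          rw [Finset.mem_filter, Finset.mem_ssubsets]
          refine ⟨?_, Finset.mem_insert_self i S'⟩
          constructor
          · intro j hj
            rcases Finset.mem_insert.mp hj with h | h
            · exact h ▸ hi
            · exact Finset.mem_of_mem_erase (hS'.subset h)
          · intro hc
            have : T.erase i ⊆ S' := by
              intro j hj
              have hji : j ≠ i := Finset.ne_of_mem_erase hj
              have := hc (Finset.mem_of_mem_erase hj)
              exact (Finset.mem_insert.mp this).resolve_left hji
            exact hS'.2 this
        · intro S hS
          rw [Finset.mem_filter, Finset.mem_ssubsets] at hS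
          rw [Finset.mem_ssubsets]
          constructor
          · exact Finset.erase_subset_erase i hS.1.subset
          · intro hc
            apply hS.1.2
            intro j hj
            by_cases hji : j = i
            · exact hji ▸ hS.2
            · exact Finset.mem_of_mem_erase (hc (Finset.mem_erase.mpr ⟨hji, hj⟩))
        · intro S' hS'
          rw [Finset.mem_ssubsets] at hS'
          exact Finset.erase_insert (fun h => (Finset.mem_erase.mp (hS'.subset h)).1 rfl)
        · intro S hS
          rw [Finset.mem_filter] at hS
          exact Finset.insert_erase hS.2
        · intro S' hS'
          rw [Finset.mem_ssubsets] at hS'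
          have hsd : (T.erase i) \ S' = T \ insert i S' := by
            ext j
            simp only [Finset.mem_sdiff, Finset.mem_erase, Finset.mem_insert]
            constructor
            · rintro ⟨⟨hji, hjT⟩, hjS⟩; exact ⟨hjT, fun h => h.elim hji hjS⟩
            · rintro ⟨hjT, h⟩
              push_neg at h
              exact ⟨⟨h.1, hjT⟩, h.2⟩
          rw [hsd]
          congr 2
          exact (Finset.erase_insert (fun h => (Finset.mem_erase.mp (hS'.subset h)).1 rfl)).symm
  intro i x
  exact (key Finset.univ).2 i (Finset.mem_univ i) x
end

section
/- Expectation commutes with the generalized Wick product: for disjoint S, T ⊆ [n] and bounded measurable f, E_{d_T ∼ X_T}[ω_{f,X_S}] = ω_{g,X_S} where g := E_{d_T ∼ X_T}[f] is the function obtained from f by integrating out the arguments in T against the joint law of X_T. -/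
open MeasureTheory Finset

/-- Expectation commutes with the generalized Wick product: for disjoint `S, T ⊆ [n]`
and bounded measurable `f`, `E_{d_T∼X_T}[ω_{f,X_S}] = ω_{g,X_S}`, where
`g := E_{d_T∼X_T}[f]` integrates out the arguments in `T` against the joint law of
`X_T`. Here `ω_{f,·}` and `ω_{g,·}` are the generalized Wick product families of `f`
and `g`, given by their recursive defining equations. -/
theorem generalized_wick_commutes_with_expectation
    {Ω : Type*} [MeasurableSpace Ω] (μ : Measure Ω) [IsProbabilityMeasure μ]
    (n : ℕ) (X : Fin n → Ω → ℝ) (hX : ∀ i, Measurable (X i))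
    (f : (Fin n → ℝ) → ℝ) (hf : Measurable f) (C : ℝ) (hbdd : ∀ x, |f x| ≤ C)
    (T : Finset (Fin n))
    (g : (Fin n → ℝ) → ℝ)
    (hg : ∀ x, g x = ∫ ω, f (fun i => if i ∈ T then X i ω else x i) ∂μ)
    (Wf Wg : Finset (Fin n) → (Fin n → ℝ) → ℝ)
    (hWf : ∀ (U : Finset (Fin n)) (x : Fin n → ℝ),
      Wf U x = f x - ∑ S ∈ U.ssubsets,
        ∫ ω, Wf S (fun i => if i ∈ U \ S then X i ω else x i) ∂μ)
    (hWg : ∀ (U : Finset (Fin n)) (x : Fin n → ℝ),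
      Wg U x = g x - ∑ S ∈ U.ssubsets,
        ∫ ω, Wg S (fun i => if i ∈ U \ S then X i ω else x i) ∂μ) :
    ∀ S : Finset (Fin n), Disjoint S T → ∀ x : Fin n → ℝ,
      (∫ ω, Wf S (fun i => if i ∈ T then X i ω else x i) ∂μ) = Wg S x := by
  classical
  -- measurability of substitution maps
  have hsub : ∀ V : Finset (Fin n),
      Measurable (fun p : (Fin n → ℝ) × Ω =>
        (fun i => if i ∈ V then X i p.2 else p.1 i)) := by
    intro V
    apply measurable_pi_lambda
    intro i
    by_cases h : i ∈ V
    · simp only [h, if_true]; exact (hX i).comp measurable_snd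
    · simp only [h, if_false]; exact (measurable_pi_apply i).comp measurable_fst
  -- a generic fact: any family satisfying the recursion with a bounded measurable
  -- seed function is pointwise measurable and bounded.
  have key : ∀ (h : (Fin n → ℝ) → ℝ), Measurable h → ∀ D : ℝ, (∀ x, |h x| ≤ D) →
      ∀ (W : Finset (Fin n) → (Fin n → ℝ) → ℝ),
      (∀ (U : Finset (Fin n)) (x : Fin n → ℝ),
        W U x = h x - ∑ S ∈ U.ssubsets,
          ∫ ω, W S (fun i => if i ∈ U \ S then X i ω else x i) ∂μ) →
      ∀ U, Measurable (W U) ∧ ∃ D', ∀ x, |W U x| ≤ D' := by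
    intro h hmeas D hD W hW U
    induction U using Finset.strongInduction with
    | _ U ih =>
      have hterm : ∀ S ∈ U.ssubsets,
          Measurable (fun x : Fin n → ℝ => ∫ ω, W S (fun i => if i ∈ U \ S then X i ω else x i) ∂μ) := by
        intro S hS
        have hm := (ih S (Finset.mem_ssubsets.mp hS)).1
        exact ((hm.comp (hsub (U \ S))).stronglyMeasurable.integral_prod_right').measurable
      have hbnd : ∀ S ∈ U.ssubsets, ∃ D', ∀ x : Fin n → ℝ,
          |∫ ω, W S (fun i => if i ∈ U \ S then X i ω else x i) ∂μ| ≤ D' := by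
        intro S hS
        obtain ⟨D', hD'⟩ := (ih S (Finset.mem_ssubsets.mp hS)).2
        refine ⟨D', fun x => ?_⟩
        have h := norm_integral_le_of_norm_le_const (μ := μ)
          (f := fun ω => W S (fun i => if i ∈ U \ S then X i ω else x i)) (C := D')
          (ae_of_all _ fun ω => by simpa [Real.norm_eq_abs] using hD' _)
        simpa [Real.norm_eq_abs] using h
      constructor
      · have : Measurable (fun x : Fin n → ℝ => ∑ S ∈ U.ssubsets,
            ∫ ω, W S (fun i => if i ∈ U \ S then X i ω else x i) ∂μ) :=
          Finset.measurable_sum _ hterm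
        rw [show W U = fun x : Fin n → ℝ => h x - ∑ S ∈ U.ssubsets,
            ∫ ω, W S (fun i => if i ∈ U \ S then X i ω else x i) ∂μ from funext (hW U)]
        exact hmeas.sub this
      · choose B hB using hbnd
        refine ⟨D + ∑ S ∈ U.ssubsets.attach, B S.1 S.2, fun x : Fin n → ℝ => ?_⟩
        rw [hW U]
        calc |h x - ∑ S ∈ U.ssubsets,
              ∫ ω, W S (fun i => if i ∈ U \ S then X i ω else x i) ∂μ|
            ≤ |h x| + |∑ S ∈ U.ssubsets,
              ∫ ω, W S (fun i => if i ∈ U \ S then X i ω else x i) ∂μ| := abs_sub _ _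
          _ ≤ D + ∑ S ∈ U.ssubsets.attach, B S.1 S.2 := by
              gcongr
              · exact hD x
              · rw [← Finset.sum_attach U.ssubsets]
                exact (Finset.abs_sum_le_sum_abs _ _).trans
                  (Finset.sum_le_sum fun S _ => hB S.1 S.2 x)
  -- properties of g
  have hgm : Measurable g := by
    rw [show g = fun x : Fin n → ℝ => ∫ ω, f (fun i => if i ∈ T then X i ω else x i) ∂μ
        from funext hg]
    exact ((hf.comp (hsub T)).stronglyMeasurable.integral_prod_right').measurable
  have hgb : ∀ x, |g x| ≤ C := by
    intro x
    rw [hg x]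
    have h := norm_integral_le_of_norm_le_const (μ := μ)
      (f := fun ω => f (fun i => if i ∈ T then X i ω else x i)) (C := C)
      (ae_of_all _ fun ω => by simpa [Real.norm_eq_abs] using hbdd _)
    simpa [Real.norm_eq_abs] using h
  have hWfP := key f hf C hbdd Wf hWf
  have hWgP := key g hgm C hgb Wg hWg
  -- main induction
  intro S
  induction S using Finset.strongInduction with
  | _ S ih =>
    intro hST x
    -- the two-variable integrands
    set F : Finset (Fin n) → Ω × Ω → ℝ := fun U p =>
      Wf U (fun i => if i ∈ T then X i p.1 else if i ∈ S \ U then X i p.2 else x i) with hF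
    have hFm : ∀ U, Measurable (F U) := by
      intro U
      apply (hWfP U).1.comp
      apply measurable_pi_lambda
      intro i
      by_cases h1 : i ∈ T
      · simp only [h1, if_true]; exact (hX i).comp measurable_fst
      · by_cases h2 : i ∈ S \ U
        · simp only [h1, h2, if_true, if_false]; exact (hX i).comp measurable_snd
        · simp only [h1, h2, if_false]; exact measurable_const
    have hFb : ∀ U, ∃ D', ∀ p, |F U p| ≤ D' := by
      intro U
      obtain ⟨D', hD'⟩ := (hWfP U).2
      exact ⟨D', fun p => hD' _⟩
    -- step 1: rewrite the integrand using the recursion and disjointness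
    have step1 : ∀ ω, Wf S (fun i => if i ∈ T then X i ω else x i) =
        f (fun i => if i ∈ T then X i ω else x i) -
          ∑ U ∈ S.ssubsets, ∫ ω', F U (ω, ω') ∂μ := by
      intro ω
      rw [hWf S]
      congr 1
      refine Finset.sum_congr rfl fun U hU => ?_
      congr 1
      funext ω'
      simp only [hF]
      congr 1
      funext i
      by_cases h1 : i ∈ S \ U
      · have hiS : i ∈ S := (Finset.mem_sdiff.mp h1).1
        have h2 : i ∉ T := Finset.disjoint_left.mp hST hiS
        simp [h1, h2]
      · by_cases h2 : i ∈ T <;> simp [h1, h2]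
    -- integrability facts
    have hint1 : Integrable (fun ω => f (fun i => if i ∈ T then X i ω else x i)) μ := by
      refine ⟨(hf.comp ((hsub T).comp (measurable_const.prodMk
        measurable_id))).aestronglyMeasurable, ?_⟩
      exact HasFiniteIntegral.of_bounded (C := C) (ae_of_all _ fun ω => hbdd _)
    have hintF : ∀ U, Integrable (F U) (μ.prod μ) := by
      intro U
      obtain ⟨D', hD'⟩ := hFb U
      exact ⟨(hFm U).aestronglyMeasurable,
        HasFiniteIntegral.of_bounded (C := D') (ae_of_all _ fun p => hD' p)⟩
    have hintTerm : ∀ U ∈ S.ssubsets, Integrable (fun ω => ∫ ω', F U (ω, ω') ∂μ) μ := by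
      intro U _
      obtain ⟨D', hD'⟩ := hFb U
      refine ⟨((hFm U).stronglyMeasurable.integral_prod_right').aestronglyMeasurable, ?_⟩
      refine HasFiniteIntegral.of_bounded (C := |D'|) (ae_of_all _ fun ω => ?_)
      calc ‖∫ ω', F U (ω, ω') ∂μ‖
          ≤ D' * (μ Set.univ).toReal :=
            norm_integral_le_of_norm_le_const (ae_of_all _ fun ω' => hD' _)
        _ ≤ |D'| := by simp [le_abs_self]
    -- compute
    calc (∫ ω, Wf S (fun i => if i ∈ T then X i ω else x i) ∂μ)
        = ∫ ω, (f (fun i => if i ∈ T then X i ω else x i) -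
            ∑ U ∈ S.ssubsets, ∫ ω', F U (ω, ω') ∂μ) ∂μ := by
          exact integral_congr_ae (ae_of_all _ step1)
      _ = (∫ ω, f (fun i => if i ∈ T then X i ω else x i) ∂μ) -
            ∫ ω, ∑ U ∈ S.ssubsets, ∫ ω', F U (ω, ω') ∂μ ∂μ :=
          integral_sub hint1 (integrable_finset_sum _ hintTerm)
      _ = g x - ∑ U ∈ S.ssubsets, ∫ ω, ∫ ω', F U (ω, ω') ∂μ ∂μ := by
          rw [← hg x, integral_finset_sum _ hintTerm]
      _ = g x - ∑ U ∈ S.ssubsets,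
            ∫ ω', Wg U (fun i => if i ∈ S \ U then X i ω' else x i) ∂μ := by
          congr 1
          refine Finset.sum_congr rfl fun U hU => ?_
          have hUS : U ⊂ S := Finset.mem_ssubsets.mp hU
          have hUT : Disjoint U T := hST.mono_left hUS.le
          have swap := integral_integral_swap (f := fun ω ω' => F U (ω, ω')) (hintF U)
          rw [swap]
          refine integral_congr_ae (ae_of_all _ fun ω' => ?_)
          exact ih U hUS hUT (fun i => if i ∈ S \ U then X i ω' else x i)
      _ = Wg S x := (hWg S x).symm
end

section
/- When f(x₁,…,xₙ) = ∏ᵢ xᵢ, the generalized Wick term E_{d_{[n]∖S}∼X_{[n]∖S}}[ω_{f,X_S}] evaluated at x_{[n]} equals the classical Wick term E[∏_{i∈[n]∖S} X_i]·ε_{X_S}(x_S), for every S ⊆ [n]. -/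
open MeasureTheory Finset

private lemma eps_congr {n : ℕ} {Ω : Type*} [MeasurableSpace Ω] (μ : Measure Ω)
    (X : Fin n → Ω → ℝ)
    (ε : Finset (Fin n) → (Fin n → ℝ) → ℝ)
    (hε : ∀ (T : Finset (Fin n)) (x : Fin n → ℝ),
      ε T x = (∏ i ∈ T, x i) -
        ∑ S ∈ T.ssubsets, (∫ ω, ∏ i ∈ T \ S, X i ω ∂μ) * ε S x) :
    ∀ (T : Finset (Fin n)) (x y : Fin n → ℝ), (∀ i ∈ T, x i = y i) → ε T x = ε T y := by
  intro T
  induction T using Finset.strongInduction with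
  | _ T ih =>
    intro x y hxy
    rw [hε T x, hε T y]
    congr 1
    · exact Finset.prod_congr rfl hxy
    · refine Finset.sum_congr rfl fun S hS => ?_
      have hS' := Finset.mem_ssubsets.mp hS
      rw [ih S hS' x y fun i hi => hxy i (hS'.subset hi)]

private lemma W_eq {n : ℕ} {Ω : Type*} [MeasurableSpace Ω] (μ : Measure Ω)
    [IsProbabilityMeasure μ] (X : Fin n → Ω → ℝ)
    (ε : Finset (Fin n) → (Fin n → ℝ) → ℝ)
    (hε : ∀ (T : Finset (Fin n)) (x : Fin n → ℝ),
      ε T x = (∏ i ∈ T, x i) -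
        ∑ S ∈ T.ssubsets, (∫ ω, ∏ i ∈ T \ S, X i ω ∂μ) * ε S x)
    (W : Finset (Fin n) → (Fin n → ℝ) → ℝ)
    (hW : ∀ (T : Finset (Fin n)) (x : Fin n → ℝ),
      W T x = (∏ i, x i) - ∑ S ∈ T.ssubsets,
        ∫ ω, W S (fun i => if i ∈ T \ S then X i ω else x i) ∂μ) :
    ∀ (T : Finset (Fin n)) (x : Fin n → ℝ),
      W T x = (∏ i ∈ Finset.univ \ T, x i) * ε T x := by
  intro T
  induction T using Finset.strongInduction with
  | _ T ih =>
    intro x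
    rw [hW T x]
    have hsum : ∀ S ∈ T.ssubsets,
        (∫ ω, W S (fun i => if i ∈ T \ S then X i ω else x i) ∂μ)
          = (∏ i ∈ Finset.univ \ T, x i) *
            ((∫ ω, ∏ i ∈ T \ S, X i ω ∂μ) * ε S x) := by
      intro S hS
      have hS' := Finset.mem_ssubsets.mp hS
      have hTS : S ⊆ T := hS'.subset
      have hpt : ∀ ω, W S (fun i => if i ∈ T \ S then X i ω else x i)
          = (∏ i ∈ Finset.univ \ T, x i) * ((∏ i ∈ T \ S, X i ω) * ε S x) := by
        intro ω
        rw [ih S hS']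
        have hεeq : ε S (fun i => if i ∈ T \ S then X i ω else x i) = ε S x := by
          refine eps_congr μ X ε hε S _ x fun i hi => if_neg ?_
          simp [hi]
        rw [hεeq]
        have hU : Finset.univ \ S = (T \ S) ∪ (Finset.univ \ T) := by
          ext i
          have h : i ∈ S → i ∈ T := fun h => hTS h
          simp only [Finset.mem_sdiff, Finset.mem_union, Finset.mem_univ, true_and]
          tauto
        have hdisj : Disjoint (T \ S) (Finset.univ \ T) := by
          refine Finset.disjoint_left.mpr fun i hi hi' => ?_
          exact (Finset.mem_sdiff.mp hi').2 (Finset.mem_sdiff.mp hi).1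
        rw [hU, Finset.prod_union hdisj]
        have h1 : ∏ i ∈ T \ S, (if i ∈ T \ S then X i ω else x i) = ∏ i ∈ T \ S, X i ω :=
          Finset.prod_congr rfl fun i hi => if_pos hi
        have h2 : ∏ i ∈ Finset.univ \ T, (if i ∈ T \ S then X i ω else x i)
            = ∏ i ∈ Finset.univ \ T, x i := by
          refine Finset.prod_congr rfl fun i hi => if_neg fun h => ?_
          exact (Finset.mem_sdiff.mp hi).2 (Finset.mem_sdiff.mp h).1
        rw [h1, h2]
        ring
      simp_rw [hpt]
      rw [integral_const_mul, integral_mul_const]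
    rw [Finset.sum_congr rfl hsum, ← Finset.mul_sum]
    have hprod : (∏ i, x i) = (∏ i ∈ Finset.univ \ T, x i) * ∏ i ∈ T, x i := by
      rw [Finset.prod_sdiff (Finset.subset_univ T)]
    rw [hprod, ← mul_sub, hε T x]

/-- When `f(x₁,…,xₙ) = ∏ᵢ xᵢ`, each generalized Wick term
`E_{d_{[n]∖S}∼X_{[n]∖S}}[ω_{f,X_S}]` (evaluated at `x`) equals the classical Wick
term `E[∏_{i∈[n]∖S} X_i]·ε_{X_S}(x_S)`, for every `S ⊆ [n]`. Here `ε` is the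
classical Wick product family and `W` the generalized Wick product family of the
product function, each given by its recursive defining equation. -/
theorem generalized_wick_term_of_product
    {Ω : Type*} [MeasurableSpace Ω] (μ : Measure Ω) [IsProbabilityMeasure μ]
    (n : ℕ) (X : Fin n → Ω → ℝ) (hX : ∀ i, Measurable (X i))
    (hXbdd : ∀ i, ∃ C, ∀ ω, |X i ω| ≤ C)
    (ε : Finset (Fin n) → (Fin n → ℝ) → ℝ)
    (hε : ∀ (T : Finset (Fin n)) (x : Fin n → ℝ),
      ε T x = (∏ i ∈ T, x i) -
        ∑ S ∈ T.ssubsets, (∫ ω, ∏ i ∈ T \ S, X i ω ∂μ) * ε S x)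
    (W : Finset (Fin n) → (Fin n → ℝ) → ℝ)
    (hW : ∀ (T : Finset (Fin n)) (x : Fin n → ℝ),
      W T x = (∏ i, x i) - ∑ S ∈ T.ssubsets,
        ∫ ω, W S (fun i => if i ∈ T \ S then X i ω else x i) ∂μ) :
    ∀ (S : Finset (Fin n)) (x : Fin n → ℝ),
      (∫ ω, W S (fun i => if i ∈ Finset.univ \ S then X i ω else x i) ∂μ) =
        (∫ ω, ∏ i ∈ Finset.univ \ S, X i ω ∂μ) * ε S x := by
  intro S x
  have key : ∀ ω, W S (fun i => if i ∈ Finset.univ \ S then X i ω else x i)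
      = (∏ i ∈ Finset.univ \ S, X i ω) * ε S x := by
    intro ω
    rw [W_eq μ X ε hε W hW]
    congr 1
    · refine Finset.prod_congr rfl fun i hi => if_pos hi
    · refine eps_congr μ X ε hε S _ x fun i hi => if_neg ?_
      simp [hi]
  simp_rw [key]
  rw [integral_mul_const]
end

section
/- For bounded measurable f with arguments partitioned by π = {B₁,…,Bₙ}, the block-structured expectation equals the sum of generalized cumulants over all refinements of π: E_π f = Σ_{α refines π} K_f(α). -/
open MeasureTheory Finset

/-- `blockExp μ X [B₁,…,Bₖ] g = E_{B₁}⋯E_{Bₖ} g`: the iterated expectation sampling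
the variables within each block jointly (one sample of `X` per block, blocks
independent), leaving the remaining arguments free. -/
noncomputable def blockExp {Ω : Type*} [MeasurableSpace Ω] (μ : Measure Ω) {n : ℕ}
    (X : Fin n → Ω → ℝ) :
    List (Finset (Fin n)) → ((Fin n → ℝ) → ℝ) → (Fin n → ℝ) → ℝ
  | [], g => g
  | B :: L, g => fun x =>
      ∫ ω, blockExp μ X L g (fun i => if i ∈ B then X i ω else x i) ∂μ

namespace BlockCumulant

variable {Ω : Type*} [MeasurableSpace Ω] {μ : Measure Ω} [IsProbabilityMeasure μ]
  {n : ℕ} {X : Fin n → Ω → ℝ}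

set_option linter.unusedSectionVars false

/-- bounded measurable functions -/
def Nice (g : (Fin n → ℝ) → ℝ) : Prop := Measurable g ∧ ∃ C, ∀ x, |g x| ≤ C

lemma Nice.add {g₁ g₂ : (Fin n → ℝ) → ℝ} (h₁ : Nice g₁) (h₂ : Nice g₂) :
    Nice (fun y => g₁ y + g₂ y) := by
  obtain ⟨m₁, C₁, hC₁⟩ := h₁; obtain ⟨m₂, C₂, hC₂⟩ := h₂
  exact ⟨m₁.add m₂, C₁ + C₂, fun x => (abs_add_le _ _).trans (add_le_add (hC₁ x) (hC₂ x))⟩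

lemma Nice.sub {g₁ g₂ : (Fin n → ℝ) → ℝ} (h₁ : Nice g₁) (h₂ : Nice g₂) :
    Nice (fun y => g₁ y - g₂ y) := by
  obtain ⟨m₁, C₁, hC₁⟩ := h₁; obtain ⟨m₂, C₂, hC₂⟩ := h₂
  exact ⟨m₁.sub m₂, C₁ + C₂, fun x => (abs_sub _ _).trans (add_le_add (hC₁ x) (hC₂ x))⟩

lemma Nice.smul {g : (Fin n → ℝ) → ℝ} (c : ℝ) (h : Nice g) :
    Nice (fun y => c * g y) := by
  obtain ⟨m, C, hC⟩ := h
  exact ⟨(measurable_const).mul m, |c| * C, fun x => by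
    rw [abs_mul]; exact mul_le_mul_of_nonneg_left (hC x) (abs_nonneg c)⟩

lemma Nice.sum {ι : Type*} (s : Finset ι) (g : ι → (Fin n → ℝ) → ℝ)
    (hg : ∀ i ∈ s, Nice (g i)) : Nice (fun y => ∑ i ∈ s, g i y) := by
  classical
  induction s using Finset.induction with
  | empty => exact ⟨measurable_const, 0, by simp⟩
  | @insert a s' hni ih =>
    simp only [Finset.sum_insert hni]
    exact (hg a (mem_insert_self a s')).add (ih fun i hi => hg i (mem_insert_of_mem hi))

lemma measurable_patch (hX : ∀ i, Measurable (X i)) (B : Finset (Fin n)) :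
    Measurable (fun p : (Fin n → ℝ) × Ω => fun i => if i ∈ B then X i p.2 else p.1 i) := by
  apply measurable_pi_lambda
  intro i
  by_cases hi : i ∈ B
  · simp only [hi, if_true]; exact (hX i).comp measurable_snd
  · simp only [hi, if_false]; exact (measurable_pi_apply i).comp measurable_fst

lemma nice_integrable {δ : Type*} [MeasurableSpace δ] (ν : Measure δ) [IsFiniteMeasure ν]
    {g : (Fin n → ℝ) → ℝ} (hg : Nice g) {φ : δ → Fin n → ℝ} (hφ : Measurable φ) :
    Integrable (fun d => g (φ d)) ν := by
  obtain ⟨mg, C, hC⟩ := hg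
  exact (integrable_const C).mono' ((mg.comp hφ).aestronglyMeasurable)
    (ae_of_all _ fun d => by simpa [Real.norm_eq_abs] using hC (φ d))

lemma blockExp_single (B : Finset (Fin n)) (g : (Fin n → ℝ) → ℝ) (x : Fin n → ℝ) :
    blockExp μ X [B] g x = ∫ ω, g (fun i => if i ∈ B then X i ω else x i) ∂μ := rfl

lemma blockExp_cons (B : Finset (Fin n)) (L : List (Finset (Fin n)))
    (g : (Fin n → ℝ) → ℝ) :
    blockExp μ X (B :: L) g = blockExp μ X [B] (blockExp μ X L g) := rfl

lemma blockExp_append (L₁ L₂ : List (Finset (Fin n))) (g : (Fin n → ℝ) → ℝ) :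
    blockExp μ X (L₁ ++ L₂) g = blockExp μ X L₁ (blockExp μ X L₂ g) := by
  induction L₁ with
  | nil => rfl
  | cons B T ih =>
    show blockExp μ X (B :: (T ++ L₂)) g = _
    rw [blockExp_cons, ih]; rfl

lemma Nice.blockExp_one (hX : ∀ i, Measurable (X i)) (B : Finset (Fin n))
    {g : (Fin n → ℝ) → ℝ} (hg : Nice g) : Nice (blockExp μ X [B] g) := by
  obtain ⟨mg, C, hC⟩ := hg
  constructor
  · have : StronglyMeasurable fun p : (Fin n → ℝ) × Ω =>
        g (fun i => if i ∈ B then X i p.2 else p.1 i) :=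
      (mg.comp (measurable_patch hX B)).stronglyMeasurable
    exact this.integral_prod_right'.measurable
  · refine ⟨C, fun x => ?_⟩
    rw [blockExp_single, ← Real.norm_eq_abs]
    calc ‖∫ ω, g (fun i => if i ∈ B then X i ω else x i) ∂μ‖
        ≤ C * (μ Set.univ).toReal := by
          apply norm_integral_le_of_norm_le_const
          exact ae_of_all _ fun ω => by simpa [Real.norm_eq_abs] using hC _
      _ = C := by simp


lemma measurable_patch_left (hX : ∀ i, Measurable (X i)) (B : Finset (Fin n)) (x : Fin n → ℝ) :
    Measurable fun ω : Ω => (fun i => if i ∈ B then X i ω else x i) := by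
  apply measurable_pi_lambda
  intro i
  by_cases hi : i ∈ B
  · simpa [hi] using hX i
  · simpa [hi] using measurable_const

lemma blockExp_one_sub (hX : ∀ i, Measurable (X i)) (B : Finset (Fin n))
    {g₁ g₂ : (Fin n → ℝ) → ℝ} (h₁ : Nice g₁) (h₂ : Nice g₂) (x : Fin n → ℝ) :
    blockExp μ X [B] (fun y => g₁ y - g₂ y) x
      = blockExp μ X [B] g₁ x - blockExp μ X [B] g₂ x := by
  simp only [blockExp_single]
  have hφ := measurable_patch_left hX B x
  exact integral_sub (nice_integrable μ h₁ hφ) (nice_integrable μ h₂ hφ)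

lemma blockExp_one_sum (hX : ∀ i, Measurable (X i)) (B : Finset (Fin n))
    {ι : Type*} (s : Finset ι) (g : ι → (Fin n → ℝ) → ℝ)
    (hg : ∀ i ∈ s, Nice (g i)) (x : Fin n → ℝ) :
    blockExp μ X [B] (fun y => ∑ i ∈ s, g i y) x
      = ∑ i ∈ s, blockExp μ X [B] (g i) x := by
  simp only [blockExp_single]
  have hφ := measurable_patch_left hX B x
  exact integral_finset_sum s fun i hi => nice_integrable μ (hg i hi) hφ

lemma blockExp_one_smul (hX : ∀ i, Measurable (X i)) (B : Finset (Fin n))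
    (c : ℝ) {g : (Fin n → ℝ) → ℝ} (hg : Nice g) (x : Fin n → ℝ) :
    blockExp μ X [B] (fun y => c * g y) x = c * blockExp μ X [B] g x := by
  simp only [blockExp_single]
  exact integral_const_mul c _

lemma blockExp_one_add (hX : ∀ i, Measurable (X i)) (B : Finset (Fin n))
    {g₁ g₂ : (Fin n → ℝ) → ℝ} (h₁ : Nice g₁) (h₂ : Nice g₂) (x : Fin n → ℝ) :
    blockExp μ X [B] (fun y => g₁ y + g₂ y) x
      = blockExp μ X [B] g₁ x + blockExp μ X [B] g₂ x := by
  simp only [blockExp_single]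
  have hφ := measurable_patch_left hX B x
  exact integral_add (nice_integrable μ h₁ hφ) (nice_integrable μ h₂ hφ)

/-- Fubini: block expectations over disjoint blocks commute. -/
lemma blockExp_one_comm (hX : ∀ i, Measurable (X i)) {A B : Finset (Fin n)}
    (hAB : Disjoint A B) {g : (Fin n → ℝ) → ℝ} (hg : Nice g) (x : Fin n → ℝ) :
    blockExp μ X [A] (blockExp μ X [B] g) x
      = blockExp μ X [B] (blockExp μ X [A] g) x := by
  have key : ∀ (ω ω' : Ω),
      (fun i => if i ∈ B then X i ω' else if i ∈ A then X i ω else x i)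
        = (fun i => if i ∈ A then X i ω else if i ∈ B then X i ω' else x i) := by
    intro ω ω'; funext i
    by_cases hiA : i ∈ A
    · have hiB : i ∉ B := Finset.disjoint_left.mp hAB hiA
      simp [hiA, hiB]
    · simp [hiA]
  have hmeas : Measurable fun p : Ω × Ω =>
      (fun i => if i ∈ A then X i p.1 else if i ∈ B then X i p.2 else x i) := by
    apply measurable_pi_lambda
    intro i
    by_cases hiA : i ∈ A
    · simpa [hiA, Function.comp_def] using (hX i).comp measurable_fst
    · by_cases hiB : i ∈ B
      · simpa [hiA, hiB, Function.comp_def] using (hX i).comp measurable_snd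
      · simpa [hiA, hiB] using measurable_const
  have hint : Integrable
      (Function.uncurry fun ω ω' =>
        g (fun i => if i ∈ A then X i ω else if i ∈ B then X i ω' else x i)) (μ.prod μ) :=
    nice_integrable (μ.prod μ) hg (φ := fun p : Ω × Ω =>
      (fun i => if i ∈ A then X i p.1 else if i ∈ B then X i p.2 else x i)) hmeas
  calc blockExp μ X [A] (blockExp μ X [B] g) x
      = ∫ ω, ∫ ω', g (fun i => if i ∈ A then X i ω else if i ∈ B then X i ω' else x i) ∂μ ∂μ := by
        simp only [blockExp_single]
        apply integral_congr_ae; apply ae_of_all; intro ω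
        apply integral_congr_ae; apply ae_of_all; intro ω'
        exact congrArg g (key ω ω')
    _ = ∫ ω', ∫ ω, g (fun i => if i ∈ A then X i ω else if i ∈ B then X i ω' else x i) ∂μ ∂μ :=
        integral_integral_swap hint
    _ = blockExp μ X [B] (blockExp μ X [A] g) x := by
        simp only [blockExp_single]


/-! ### Finpartition helpers -/

lemma parts_top_of_nonempty {m : ℕ} {B : Finset (Fin m)} (hB : B.Nonempty) :
    (⊤ : Finpartition B).parts = {B} := by
  have hsub := Finpartition.parts_top_subset B
  rcases Finset.subset_singleton_iff.mp hsub with h | h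
  · exact absurd h
      (Finpartition.parts_nonempty _ (by simp [Finset.bot_eq_empty, hB.ne_empty])).ne_empty
  · exact h

lemma toList_top {m : ℕ} {B : Finset (Fin m)} (hB : B.Nonempty) :
    (⊤ : Finpartition B).parts.toList = [B] := by
  rw [parts_top_of_nonempty hB, Finset.toList_singleton]

lemma eq_top_of_mem {m : ℕ} {B : Finset (Fin m)} (hB : B.Nonempty) (β : Finpartition B)
    (h : B ∈ β.parts) : β = ⊤ := by
  apply Finpartition.ext
  rw [parts_top_of_nonempty hB]
  apply Finset.Subset.antisymm
  · intro A hA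
    rw [Finset.mem_singleton]
    by_contra hne
    have hd : Disjoint A B := β.disjoint hA h hne
    exact β.ne_bot hA (hd.eq_bot_of_le (β.le hA))
  · simpa using h

lemma part_card_lt {m : ℕ} {B : Finset (Fin m)} (hB : B.Nonempty) {β : Finpartition B}
    (hβ : β ≠ ⊤) {A : Finset (Fin m)} (hA : A ∈ β.parts) : A.card < B.card := by
  apply Finset.card_lt_card
  rw [Finset.ssubset_iff_subset_ne]
  refine ⟨β.le hA, fun hEq => hβ ?_⟩
  exact eq_top_of_mem hB β (hEq ▸ hA)

lemma parts_subs {m : ℕ} {B : Finset (Fin m)} {β : Finpartition B}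
    {A : Finset (Fin m)} (hA : A ∈ β.parts) : A ⊆ B := β.le hA

lemma parts_nonempty' {m : ℕ} {B : Finset (Fin m)} {β : Finpartition B}
    {A : Finset (Fin m)} (hA : A ∈ β.parts) : A.Nonempty :=
  Finpartition.nonempty_of_mem_parts _ hA

section Combinatorics

variable {γ : Type*} [DecidableEq γ]

lemma toList_pairwise_disjoint {S : Finset γ} (π : Finpartition S) :
    π.parts.toList.Pairwise (fun A A' => Disjoint A A') := by
  have hnd : π.parts.toList.Pairwise (· ≠ ·) := π.parts.nodup_toList
  exact hnd.imp_of_mem fun {a b} ha hb hne =>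
    π.disjoint (Finset.mem_toList.mp ha) (Finset.mem_toList.mp hb) hne

/-- The partition of `S \ B` obtained by removing the part `B` from `π`. -/
def erasePart {S : Finset γ} (π : Finpartition S) (B : Finset γ) (hB : B ∈ π.parts) :
    Finpartition (S \ B) :=
  π.ofSubset (Finset.erase_subset _ _) (by
    apply le_antisymm
    · apply Finset.sup_le
      intro A hA
      obtain ⟨hne, hmem⟩ := Finset.mem_erase.mp hA
      exact (Finset.subset_sdiff.mpr ⟨π.le hmem, π.disjoint hmem hB hne⟩ :
        id A ≤ S \ B)
    · intro b hb
      obtain ⟨hbS, hbB⟩ := Finset.mem_sdiff.mp hb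
      obtain ⟨P, hP, hbP⟩ := π.exists_mem hbS
      have hPe : P ∈ π.parts.erase B :=
        Finset.mem_erase.mpr ⟨fun hEq => hbB (hEq ▸ hbP), hP⟩
      exact (Finset.le_sup hPe : id P ≤ _) hbP)

@[simp] lemma erasePart_parts {S : Finset γ} (π : Finpartition S) (B : Finset γ)
    (hB : B ∈ π.parts) : (erasePart π B hB).parts = π.parts.erase B := rfl

/-- Combine a partition of `B` and a partition of `S \ B` into a partition of `S`. -/
def combinePart {S B : Finset γ} (hBS : B ⊆ S) (β : Finpartition B)
    (a' : Finpartition (S \ B)) : Finpartition S where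
  parts := β.parts ∪ a'.parts
  supIndep := by
    rw [Finset.supIndep_iff_pairwiseDisjoint]
    intro u hu v hv huv
    simp only [Finset.coe_union, Set.mem_union, Finset.mem_coe] at hu hv
    have hBd : Disjoint B (S \ B) := Finset.disjoint_sdiff
    rcases hu with hu | hu <;> rcases hv with hv | hv
    · exact β.disjoint hu hv huv
    · exact hBd.mono (β.le hu) (a'.le hv)
    · exact (hBd.mono (β.le hv) (a'.le hu)).symm
    · exact a'.disjoint hu hv huv
  sup_parts := by
    rw [Finset.sup_union, β.sup_parts, a'.sup_parts]
    exact (Finset.union_sdiff_of_subset hBS : B ⊔ (S \ B) = S)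
  bot_notMem := by
    rw [Finset.mem_union]
    rintro (h | h)
    · exact β.bot_notMem h
    · exact a'.bot_notMem h

@[simp] lemma combinePart_parts {S B : Finset γ} (hBS : B ⊆ S) (β : Finpartition B)
    (a' : Finpartition (S \ B)) : (combinePart hBS β a').parts = β.parts ∪ a'.parts := rfl

/-- Restriction of a refinement `a ≤ π` to the part `B` of `π`. -/
def restrB {S : Finset γ} (π : Finpartition S) {B : Finset γ} (hB : B ∈ π.parts)
    (a : Finpartition S) (ha : a ≤ π) : Finpartition B :=
  a.ofSubset (Finset.filter_subset (· ⊆ B) a.parts) (by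
    apply le_antisymm
    · exact Finset.sup_le fun A hA => (Finset.mem_filter.mp hA).2
    · intro b hb
      have hbS : b ∈ S := π.le hB hb
      obtain ⟨P, hP, hbP⟩ := a.exists_mem hbS
      obtain ⟨Q, hQ, hPQ⟩ := ha hP
      have hQB : Q = B := Finpartition.eq_of_mem_parts _ hQ hB (hPQ hbP) hb
      have hPf : P ∈ a.parts.filter (· ⊆ B) :=
        Finset.mem_filter.mpr ⟨hP, hQB ▸ hPQ⟩
      exact (Finset.le_sup hPf : id P ≤ _) hbP)

@[simp] lemma restrB_parts {S : Finset γ} (π : Finpartition S) {B : Finset γ}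
    (hB : B ∈ π.parts) (a : Finpartition S) (ha : a ≤ π) :
    (restrB π hB a ha).parts = a.parts.filter (· ⊆ B) := rfl

/-- Restriction of a refinement `a ≤ π` to the complement of the part `B` of `π`. -/
def restrC {S : Finset γ} (π : Finpartition S) {B : Finset γ} (hB : B ∈ π.parts)
    (a : Finpartition S) (ha : a ≤ π) : Finpartition (S \ B) :=
  a.ofSubset (Finset.filter_subset (fun A => ¬ A ⊆ B) a.parts) (by
    apply le_antisymm
    · apply Finset.sup_le
      intro A hA
      obtain ⟨hP, hnB⟩ := Finset.mem_filter.mp hA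
      obtain ⟨Q, hQ, hPQ⟩ := ha hP
      have hQB : Q ≠ B := fun hEq => hnB (hEq ▸ hPQ)
      exact (Finset.subset_sdiff.mpr ⟨(π.le hQ) |>.trans' hPQ |>.trans (le_refl S),
        Finset.disjoint_of_subset_left hPQ (π.disjoint hQ hB hQB)⟩ : id A ≤ S \ B)
    · intro b hb
      obtain ⟨hbS, hbB⟩ := Finset.mem_sdiff.mp hb
      obtain ⟨P, hP, hbP⟩ := a.exists_mem hbS
      have hnB : ¬ P ⊆ B := fun hPB => hbB (hPB hbP)
      have hPf : P ∈ a.parts.filter (fun A => ¬ A ⊆ B) := Finset.mem_filter.mpr ⟨hP, hnB⟩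
      exact (Finset.le_sup hPf : id P ≤ _) hbP)

@[simp] lemma restrC_parts {S : Finset γ} (π : Finpartition S) {B : Finset γ}
    (hB : B ∈ π.parts) (a : Finpartition S) (ha : a ≤ π) :
    (restrC π hB a ha).parts = a.parts.filter (fun A => ¬ A ⊆ B) := rfl

lemma restrC_le {S : Finset γ} (π : Finpartition S) {B : Finset γ} (hB : B ∈ π.parts)
    (a : Finpartition S) (ha : a ≤ π) : restrC π hB a ha ≤ erasePart π B hB := by
  intro A hA
  obtain ⟨hP, hnB⟩ := Finset.mem_filter.mp hA
  obtain ⟨Q, hQ, hPQ⟩ := ha hP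
  have hQB : Q ≠ B := fun hEq => hnB (hEq ▸ hPQ)
  exact ⟨Q, Finset.mem_erase.mpr ⟨hQB, hQ⟩, hPQ⟩

lemma combinePart_le {S B : Finset γ} (π : Finpartition S) (hB : B ∈ π.parts)
    (β : Finpartition B) (a' : Finpartition (S \ B)) (ha' : a' ≤ erasePart π B hB) :
    combinePart (π.le hB) β a' ≤ π := by
  intro A hA
  rcases Finset.mem_union.mp hA with h | h
  · exact ⟨B, hB, β.le h⟩
  · obtain ⟨Q, hQ, hAQ⟩ := ha' h
    exact ⟨Q, Finset.mem_erase.mp hQ |>.2, hAQ⟩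

lemma toList_union_perm {δ : Type*} [DecidableEq δ] {s t : Finset δ} (h : Disjoint s t) :
    (s ∪ t).toList.Perm (t.toList ++ s.toList) := by
  apply Multiset.coe_eq_coe.mp
  calc ((s ∪ t).toList : Multiset δ) = (s ∪ t).val := Finset.coe_toList _
    _ = (s.disjUnion t h).val := by rw [Finset.disjUnion_eq_union]
    _ = s.val + t.val := rfl
    _ = t.val + s.val := add_comm _ _
    _ = (t.toList : Multiset δ) + (s.toList : Multiset δ) := by
        rw [Finset.coe_toList, Finset.coe_toList]
    _ = ((t.toList ++ s.toList : List δ) : Multiset δ) := (Multiset.coe_add _ _).symm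

lemma toList_erase_perm {δ : Type*} [DecidableEq δ] {s : Finset δ} {b : δ} (h : b ∈ s) :
    s.toList.Perm (b :: (s.erase b).toList) := by
  apply Multiset.coe_eq_coe.mp
  calc (s.toList : Multiset δ) = s.val := Finset.coe_toList _
    _ = b ::ₘ s.val.erase b := (Multiset.cons_erase (by exact h)).symm
    _ = b ::ₘ ((s.erase b).toList : Multiset δ) := by
        rw [Finset.coe_toList, Finset.erase_val]
    _ = ((b :: (s.erase b).toList : List δ) : Multiset δ) := (Multiset.cons_coe _ _).symm

lemma parts_disjoint_of_compl {S B : Finset γ} (β : Finpartition B)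
    (a' : Finpartition (S \ B)) : Disjoint β.parts a'.parts := by
  rw [Finset.disjoint_left]
  intro A hA hA'
  have h1 : A ⊆ B := β.le hA
  have h2 : A ⊆ S \ B := a'.le hA'
  obtain ⟨c, hc⟩ := Finpartition.nonempty_of_mem_parts _ hA
  exact (Finset.mem_sdiff.mp (h2 hc)).2 (h1 hc)

lemma restrB_combine {S B : Finset γ} (π : Finpartition S) (hB : B ∈ π.parts)
    (β : Finpartition B) (a' : Finpartition (S \ B)) (ha' : a' ≤ erasePart π B hB) :
    restrB π hB (combinePart (π.le hB) β a') (combinePart_le π hB β a' ha') = β := by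
  apply Finpartition.ext
  rw [restrB_parts, combinePart_parts]
  ext A
  simp only [Finset.mem_filter, Finset.mem_union]
  constructor
  · rintro ⟨h | h, hAB⟩
    · exact h
    · exfalso
      obtain ⟨c, hc⟩ := Finpartition.nonempty_of_mem_parts _ h
      exact (Finset.mem_sdiff.mp (a'.le h hc)).2 (hAB hc)
  · intro h
    exact ⟨Or.inl h, β.le h⟩

lemma restrC_combine {S B : Finset γ} (π : Finpartition S) (hB : B ∈ π.parts)
    (β : Finpartition B) (a' : Finpartition (S \ B)) (ha' : a' ≤ erasePart π B hB) :
    restrC π hB (combinePart (π.le hB) β a') (combinePart_le π hB β a' ha') = a' := by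
  apply Finpartition.ext
  rw [restrC_parts, combinePart_parts]
  ext A
  simp only [Finset.mem_filter, Finset.mem_union]
  constructor
  · rintro ⟨h | h, hAB⟩
    · exact absurd (β.le h) hAB
    · exact h
  · intro h
    refine ⟨Or.inr h, fun hAB => ?_⟩
    obtain ⟨c, hc⟩ := Finpartition.nonempty_of_mem_parts _ h
    exact (Finset.mem_sdiff.mp (a'.le h hc)).2 (hAB hc)

lemma combine_restr {S B : Finset γ} (π : Finpartition S) (hB : B ∈ π.parts)
    (a : Finpartition S) (ha : a ≤ π) :
    combinePart (π.le hB) (restrB π hB a ha) (restrC π hB a ha) = a := by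
  apply Finpartition.ext
  rw [combinePart_parts, restrB_parts, restrC_parts]
  exact Finset.filter_union_filter_not_eq _ _

end Combinatorics

/-! ### Properties of the cumulant operator -/

section Kb

variable {Kb : Finset (Fin n) → ((Fin n → ℝ) → ℝ) → (Fin n → ℝ) → ℝ}
variable (hKb : ∀ (B : Finset (Fin n)) (h : (Fin n → ℝ) → ℝ) (x : Fin n → ℝ),
      blockExp μ X [B] h x =
        ∑ β : Finpartition B, (β.parts.toList.foldl (fun g A => Kb A g) h) x)

include hKb

lemma Kb_rec {B : Finset (Fin n)} (hB : B.Nonempty) (h : (Fin n → ℝ) → ℝ) (x : Fin n → ℝ) :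
    Kb B h x = blockExp μ X [B] h x -
      ∑ β ∈ Finset.univ.erase (⊤ : Finpartition B),
        (β.parts.toList.foldl (fun g A => Kb A g) h) x := by
  have h1 := hKb B h x
  have h2 : (((⊤ : Finpartition B).parts.toList).foldl (fun g A => Kb A g) h) x = Kb B h x := by
    rw [toList_top hB]; rfl
  rw [← Finset.sum_erase_add _ _ (Finset.mem_univ (⊤ : Finpartition B)), h2] at h1
  linarith

omit hKb

lemma foldl_nice {L : List (Finset (Fin n))}
    (hL : ∀ A ∈ L, ∀ h, Nice h → Nice (Kb A h)) {h : (Fin n → ℝ) → ℝ} (hh : Nice h) :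
    Nice (L.foldl (fun g A => Kb A g) h) := by
  induction L generalizing h with
  | nil => exact hh
  | cons A T ih =>
    exact ih (fun A' hA' => hL A' (List.mem_cons_of_mem _ hA'))
      (hL A (List.mem_cons_self) h hh)

lemma foldl_smul {L : List (Finset (Fin n))}
    (hLn : ∀ A ∈ L, ∀ h, Nice h → Nice (Kb A h))
    (hLs : ∀ A ∈ L, ∀ (c : ℝ) h, Nice h → ∀ x, Kb A (fun y => c * h y) x = c * Kb A h x)
    (c : ℝ) {h : (Fin n → ℝ) → ℝ} (hh : Nice h) (x : Fin n → ℝ) :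
    (L.foldl (fun g A => Kb A g) (fun y => c * h y)) x
      = c * (L.foldl (fun g A => Kb A g) h) x := by
  induction L generalizing h with
  | nil => rfl
  | cons A T ih =>
    show (T.foldl _ (Kb A fun y => c * h y)) x = _
    have : Kb A (fun y => c * h y) = fun y => c * Kb A h y :=
      funext fun y => hLs A (List.mem_cons_self) c h hh y
    rw [this]
    exact ih (fun A' hA' => hLn A' (List.mem_cons_of_mem _ hA'))
      (fun A' hA' => hLs A' (List.mem_cons_of_mem _ hA'))
      (hLn A (List.mem_cons_self) h hh)

lemma foldl_add {L : List (Finset (Fin n))}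
    (hLn : ∀ A ∈ L, ∀ h, Nice h → Nice (Kb A h))
    (hLa : ∀ A ∈ L, ∀ h₁ h₂, Nice h₁ → Nice h₂ → ∀ x,
      Kb A (fun y => h₁ y + h₂ y) x = Kb A h₁ x + Kb A h₂ x)
    {h₁ h₂ : (Fin n → ℝ) → ℝ} (hh₁ : Nice h₁) (hh₂ : Nice h₂) (x : Fin n → ℝ) :
    (L.foldl (fun g A => Kb A g) (fun y => h₁ y + h₂ y)) x
      = (L.foldl (fun g A => Kb A g) h₁) x + (L.foldl (fun g A => Kb A g) h₂) x := by
  induction L generalizing h₁ h₂ with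
  | nil => rfl
  | cons A T ih =>
    show (T.foldl _ (Kb A fun y => h₁ y + h₂ y)) x = _
    have : Kb A (fun y => h₁ y + h₂ y) = fun y => Kb A h₁ y + Kb A h₂ y :=
      funext fun y => hLa A (List.mem_cons_self) h₁ h₂ hh₁ hh₂ y
    rw [this]
    exact ih (fun A' hA' => hLn A' (List.mem_cons_of_mem _ hA'))
      (fun A' hA' => hLa A' (List.mem_cons_of_mem _ hA'))
      (hLn A (List.mem_cons_self) h₁ hh₁) (hLn A (List.mem_cons_self) h₂ hh₂)

variable (hX : ∀ i, Measurable (X i))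
include hKb hX

lemma Kb_pack : ∀ (N : ℕ) (B : Finset (Fin n)), B.card ≤ N → B.Nonempty →
    (∀ h, Nice h → Nice (Kb B h)) ∧
    (∀ (c : ℝ) h, Nice h → ∀ x, Kb B (fun y => c * h y) x = c * Kb B h x) ∧
    (∀ h₁ h₂, Nice h₁ → Nice h₂ → ∀ x,
      Kb B (fun y => h₁ y + h₂ y) x = Kb B h₁ x + Kb B h₂ x) := by
  intro N
  induction N with
  | zero =>
    intro B hBc hBne
    exact absurd (Finset.card_pos.mpr hBne) (by omega)
  | succ N ih =>
    intro B hBc hBne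
    classical
    have hsmall : ∀ β ∈ Finset.univ.erase (⊤ : Finpartition B),
        ∀ A ∈ β.parts, A.card ≤ N ∧ A.Nonempty := by
      intro β hβ A hA
      have hβ' : β ≠ ⊤ := (Finset.mem_erase.mp hβ).1
      exact ⟨by have := part_card_lt hBne hβ' hA; omega, parts_nonempty' hA⟩
    have hpn : ∀ β ∈ Finset.univ.erase (⊤ : Finpartition B),
        ∀ A ∈ β.parts.toList, ∀ h, Nice h → Nice (Kb A h) := by
      intro β hβ A hA
      obtain ⟨h1, h2⟩ := hsmall β hβ A (Finset.mem_toList.mp hA)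
      exact (ih A h1 h2).1
    have hps : ∀ β ∈ Finset.univ.erase (⊤ : Finpartition B),
        ∀ A ∈ β.parts.toList, ∀ (c : ℝ) h, Nice h → ∀ x,
          Kb A (fun y => c * h y) x = c * Kb A h x := by
      intro β hβ A hA
      obtain ⟨h1, h2⟩ := hsmall β hβ A (Finset.mem_toList.mp hA)
      exact (ih A h1 h2).2.1
    have hpa : ∀ β ∈ Finset.univ.erase (⊤ : Finpartition B),
        ∀ A ∈ β.parts.toList, ∀ h₁ h₂, Nice h₁ → Nice h₂ → ∀ x,
          Kb A (fun y => h₁ y + h₂ y) x = Kb A h₁ x + Kb A h₂ x := by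
      intro β hβ A hA
      obtain ⟨h1, h2⟩ := hsmall β hβ A (Finset.mem_toList.mp hA)
      exact (ih A h1 h2).2.2
    refine ⟨?_, ?_, ?_⟩
    · intro h hh
      have : Kb B h = fun x => blockExp μ X [B] h x -
          ∑ β ∈ Finset.univ.erase (⊤ : Finpartition B),
            (β.parts.toList.foldl (fun g A => Kb A g) h) x :=
        funext fun x => Kb_rec hKb hBne h x
      rw [this]
      exact (hh.blockExp_one hX B).sub
        (Nice.sum _ _ fun β hβ => foldl_nice (hpn β hβ) hh)
    · intro c h hh x
      rw [Kb_rec hKb hBne _ x, Kb_rec hKb hBne h x,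
        blockExp_one_smul hX B c hh x]
      rw [Finset.sum_congr rfl fun β hβ =>
        foldl_smul (hpn β hβ) (hps β hβ) c hh x]
      rw [← Finset.mul_sum]
      ring
    · intro h₁ h₂ hh₁ hh₂ x
      rw [Kb_rec hKb hBne _ x, Kb_rec hKb hBne h₁ x, Kb_rec hKb hBne h₂ x,
        blockExp_one_add hX B hh₁ hh₂ x]
      rw [Finset.sum_congr rfl fun β hβ =>
        foldl_add (hpn β hβ) (hpa β hβ) hh₁ hh₂ x]
      rw [Finset.sum_add_distrib]
      ring

lemma Kb_nice {B : Finset (Fin n)} (hB : B.Nonempty) {h : (Fin n → ℝ) → ℝ} (hh : Nice h) :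
    Nice (Kb B h) :=
  (Kb_pack hKb hX B.card B le_rfl hB).1 h hh

lemma Kb_smul {B : Finset (Fin n)} (hB : B.Nonempty) (c : ℝ) {h : (Fin n → ℝ) → ℝ}
    (hh : Nice h) (x : Fin n → ℝ) : Kb B (fun y => c * h y) x = c * Kb B h x :=
  (Kb_pack hKb hX B.card B le_rfl hB).2.1 c h hh x

lemma Kb_add {B : Finset (Fin n)} (hB : B.Nonempty) {h₁ h₂ : (Fin n → ℝ) → ℝ}
    (hh₁ : Nice h₁) (hh₂ : Nice h₂) (x : Fin n → ℝ) :
    Kb B (fun y => h₁ y + h₂ y) x = Kb B h₁ x + Kb B h₂ x :=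
  (Kb_pack hKb hX B.card B le_rfl hB).2.2 h₁ h₂ hh₁ hh₂ x

lemma Kb_zero {B : Finset (Fin n)} (hB : B.Nonempty) (x : Fin n → ℝ) :
    Kb B (fun _ => (0 : ℝ)) x = 0 := by
  have h0 : (fun _ : Fin n → ℝ => (0 : ℝ))
      = fun y => (0 : ℝ) * (fun _ : Fin n → ℝ => (0 : ℝ)) y := by funext y; ring
  conv_lhs => rw [h0]
  rw [Kb_smul hKb hX hB 0 ⟨measurable_const, 0, by simp⟩ x]
  ring

lemma Kb_sub {B : Finset (Fin n)} (hB : B.Nonempty) {h₁ h₂ : (Fin n → ℝ) → ℝ}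
    (hh₁ : Nice h₁) (hh₂ : Nice h₂) (x : Fin n → ℝ) :
    Kb B (fun y => h₁ y - h₂ y) x = Kb B h₁ x - Kb B h₂ x := by
  have h0 : (fun y => h₁ y - h₂ y) = fun y => h₁ y + (fun z => (-1 : ℝ) * h₂ z) y := by
    funext y; ring
  rw [h0, Kb_add hKb hX hB hh₁ (hh₂.smul (-1)) x, Kb_smul hKb hX hB (-1) hh₂ x]
  ring

lemma Kb_sum {B : Finset (Fin n)} (hB : B.Nonempty) {ι : Type*} (s : Finset ι)
    (g : ι → (Fin n → ℝ) → ℝ) (hg : ∀ i ∈ s, Nice (g i)) (x : Fin n → ℝ) :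
    Kb B (fun y => ∑ i ∈ s, g i y) x = ∑ i ∈ s, Kb B (g i) x := by
  classical
  induction s using Finset.induction with
  | empty => simpa using Kb_zero hKb hX hB x
  | @insert a s' hni ihs =>
    have h0 : (fun y => ∑ i ∈ insert a s', g i y)
        = fun y => g a y + (fun z => ∑ i ∈ s', g i z) y := by
      funext y; simp [Finset.sum_insert hni]
    rw [h0, Kb_add hKb hX hB (hg a (Finset.mem_insert_self a s'))
      (Nice.sum _ _ fun i hi => hg i (Finset.mem_insert_of_mem hi)) x,
      Finset.sum_insert hni, ihs fun i hi => hg i (Finset.mem_insert_of_mem hi)]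

omit hX hKb in
lemma foldl_push_blockExp {A : Finset (Fin n)} {L : List (Finset (Fin n))}
    (hLn : ∀ A' ∈ L, ∀ h, Nice h → Nice (Kb A' h))
    (hLc : ∀ A' ∈ L, ∀ h, Nice h → ∀ x,
      blockExp μ X [A] (Kb A' h) x = Kb A' (blockExp μ X [A] h) x)
    {h : (Fin n → ℝ) → ℝ} (hh : Nice h) (x : Fin n → ℝ) :
    blockExp μ X [A] (L.foldl (fun g A' => Kb A' g) h) x
      = (L.foldl (fun g A' => Kb A' g) (blockExp μ X [A] h)) x := by
  induction L generalizing h with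
  | nil => rfl
  | cons A' T ih =>
    show blockExp μ X [A] (T.foldl _ (Kb A' h)) x = (T.foldl _ (Kb A' (blockExp μ X [A] h))) x
    rw [ih (fun A'' hA'' => hLn A'' (List.mem_cons_of_mem _ hA''))
      (fun A'' hA'' => hLc A'' (List.mem_cons_of_mem _ hA''))
      (hLn A' (List.mem_cons_self) h hh)]
    have : blockExp μ X [A] (Kb A' h) = Kb A' (blockExp μ X [A] h) :=
      funext fun y => hLc A' (List.mem_cons_self) h hh y
    rw [this]

/-- `blockExp` over `A` commutes with `Kb B` for disjoint blocks. -/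
lemma blockExp_Kb_comm : ∀ (M : ℕ) (B : Finset (Fin n)), B.card ≤ M → B.Nonempty →
    ∀ (A : Finset (Fin n)), Disjoint A B → ∀ h, Nice h → ∀ x,
      blockExp μ X [A] (Kb B h) x = Kb B (blockExp μ X [A] h) x := by
  intro M
  induction M with
  | zero =>
    intro B hBc hBne
    exact absurd (Finset.card_pos.mpr hBne) (by omega)
  | succ M ih =>
    intro B hBc hBne A hAB h hh x
    classical
    have hfun : ∀ g, Kb B g = fun y => blockExp μ X [B] g y -
        ∑ β ∈ Finset.univ.erase (⊤ : Finpartition B),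
          (β.parts.toList.foldl (fun g' A' => Kb A' g') g) y :=
      fun g => funext fun y => Kb_rec hKb hBne g y
    have hpn : ∀ β ∈ Finset.univ.erase (⊤ : Finpartition B),
        ∀ A' ∈ β.parts.toList, ∀ h', Nice h' → Nice (Kb A' h') := by
      intro β hβ A' hA' h' hh'
      exact Kb_nice hKb hX (parts_nonempty' (Finset.mem_toList.mp hA')) hh'
    have hpc : ∀ β ∈ Finset.univ.erase (⊤ : Finpartition B),
        ∀ A' ∈ β.parts.toList, ∀ h', Nice h' → ∀ y,
          blockExp μ X [A] (Kb A' h') y = Kb A' (blockExp μ X [A] h') y := by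
      intro β hβ A' hA' h' hh' y
      have hβ' : β ≠ ⊤ := (Finset.mem_erase.mp hβ).1
      have hlt := part_card_lt hBne hβ' (Finset.mem_toList.mp hA')
      exact ih A' (by omega) (parts_nonempty' (Finset.mem_toList.mp hA')) A
        (Finset.disjoint_of_subset_right (parts_subs (Finset.mem_toList.mp hA')) hAB) h' hh' y
    have hnice_foldl : ∀ β ∈ Finset.univ.erase (⊤ : Finpartition B),
        Nice (β.parts.toList.foldl (fun g' A' => Kb A' g') h) :=
      fun β hβ => foldl_nice (hpn β hβ) hh
    rw [hfun h]
    rw [blockExp_one_sub hX A (hh.blockExp_one hX B)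
      (Nice.sum _ _ hnice_foldl) x]
    rw [blockExp_one_sum hX A _ _ hnice_foldl x]
    rw [Finset.sum_congr rfl fun β hβ =>
      foldl_push_blockExp (hpn β hβ) (hpc β hβ) hh x]
    rw [blockExp_one_comm hX hAB hh x]
    rw [hfun (blockExp μ X [A] h)]

/-- Cumulant operators over disjoint blocks commute. -/
lemma Kb_Kb_comm : ∀ (M : ℕ) (A B : Finset (Fin n)), A.card + B.card ≤ M →
    A.Nonempty → B.Nonempty → Disjoint A B → ∀ h, Nice h → ∀ x,
      Kb A (Kb B h) x = Kb B (Kb A h) x := by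
  intro M
  induction M with
  | zero =>
    intro A B hc hA hB
    exact absurd (Finset.card_pos.mpr hA) (by omega)
  | succ M ih =>
    intro A B hc hA hB hAB h hh x
    classical
    have push : ∀ (L : List (Finset (Fin n))),
        (∀ A' ∈ L, A'.Nonempty ∧ A'.card + B.card ≤ M ∧ Disjoint A' B) →
        ∀ g, Nice g → ∀ y, (L.foldl (fun g' A' => Kb A' g') (Kb B g)) y
          = Kb B (L.foldl (fun g' A' => Kb A' g') g) y := by
      intro L
      induction L with
      | nil => intro _ g hg y; rfl
      | cons A' T ihT =>
        intro hall g hg y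
        obtain ⟨hA'ne, hA'c, hA'd⟩ := hall A' (List.mem_cons_self)
        show (T.foldl _ (Kb A' (Kb B g))) y = _
        have : Kb A' (Kb B g) = Kb B (Kb A' g) :=
          funext fun z => ih A' B hA'c hA'ne hB hA'd g hg z
        rw [this]
        exact ihT (fun A'' hA'' => hall A'' (List.mem_cons_of_mem _ hA''))
          (Kb A' g) (Kb_nice hKb hX hA'ne hg) y
    have hγprops : ∀ γ ∈ Finset.univ.erase (⊤ : Finpartition A),
        ∀ A' ∈ γ.parts.toList, A'.Nonempty ∧ A'.card + B.card ≤ M ∧ Disjoint A' B := by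
      intro γ hγ A' hA'
      have hγ' : γ ≠ ⊤ := (Finset.mem_erase.mp hγ).1
      have hmem := Finset.mem_toList.mp hA'
      have hlt := part_card_lt hA hγ' hmem
      exact ⟨parts_nonempty' hmem, by omega,
        Finset.disjoint_of_subset_left (parts_subs hmem) hAB⟩
    have hpn : ∀ γ ∈ Finset.univ.erase (⊤ : Finpartition A),
        ∀ A' ∈ γ.parts.toList, ∀ h', Nice h' → Nice (Kb A' h') := by
      intro γ hγ A' hA' h' hh'
      exact Kb_nice hKb hX (hγprops γ hγ A' hA').1 hh'
    rw [Kb_rec hKb hA (Kb B h) x]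
    rw [blockExp_Kb_comm hKb hX B.card B le_rfl hB A hAB h hh x]
    rw [Finset.sum_congr rfl fun γ hγ => push γ.parts.toList (hγprops γ hγ) h hh x]
    rw [← Kb_sum hKb hX hB (Finset.univ.erase (⊤ : Finpartition A))
      (fun γ => (γ.parts.toList.foldl (fun g' A' => Kb A' g') h))
      (fun γ hγ => foldl_nice (hpn γ hγ) hh) x]
    rw [← Kb_sub hKb hX hB (hh.blockExp_one hX A)
      (Nice.sum _ _ fun γ hγ => foldl_nice (hpn γ hγ) hh) x]
    congr 1
    exact (funext fun y => Kb_rec hKb hA h y).symm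

omit hKb hX in
lemma Nice.blockExp_list (hX : ∀ i, Measurable (X i)) (L : List (Finset (Fin n)))
    {g : (Fin n → ℝ) → ℝ} (hg : Nice g) : Nice (blockExp μ X L g) := by
  induction L with
  | nil => exact hg
  | cons B T ih => exact ih.blockExp_one hX B

omit hKb in
lemma blockExp_perm : ∀ {L L' : List (Finset (Fin n))}, L.Perm L' →
    ∀ g, Nice g → L.Pairwise Disjoint → blockExp μ X L g = blockExp μ X L' g := by
  intro L L' p
  induction p with
  | nil => intro g _ _; rfl
  | @cons a l₁ l₂ p ih =>
    intro g hg hd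
    show blockExp μ X [a] (blockExp μ X l₁ g) = blockExp μ X [a] (blockExp μ X l₂ g)
    rw [ih g hg (List.Pairwise.of_cons hd)]
  | swap a b t =>
    intro g hg hd
    show blockExp μ X [b] (blockExp μ X [a] (blockExp μ X t g))
      = blockExp μ X [a] (blockExp μ X [b] (blockExp μ X t g))
    have hba : Disjoint b a := (List.pairwise_cons.mp hd).1 a (List.mem_cons_self)
    exact funext fun x =>
      blockExp_one_comm hX hba (hg.blockExp_list hX t) x
  | trans p₁ p₂ ih₁ ih₂ =>
    intro g hg hd
    rw [ih₁ g hg hd, ih₂ g hg ((p₁.pairwise_iff fun h => Disjoint.symm h).mp hd)]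

lemma foldl_perm : ∀ {L L' : List (Finset (Fin n))}, L.Perm L' →
    ∀ h, Nice h → L.Pairwise Disjoint → (∀ A ∈ L, A.Nonempty) →
    L.foldl (fun g A => Kb A g) h = L'.foldl (fun g A => Kb A g) h := by
  intro L L' p
  induction p with
  | nil => intro h _ _ _; rfl
  | cons a p ih =>
    intro h hh hd hne
    show (_root_.List.foldl _ (Kb a h) _) = _
    exact ih (Kb a h) (Kb_nice hKb hX (hne a (List.mem_cons_self)) hh)
      (List.Pairwise.of_cons hd) (fun A hA => hne A (List.mem_cons_of_mem _ hA))
  | swap a b t =>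
    intro h hh hd hne
    show t.foldl _ (Kb a (Kb b h)) = t.foldl _ (Kb b (Kb a h))
    have hba : Disjoint b a := (List.pairwise_cons.mp hd).1 a (List.mem_cons_self)
    have : Kb a (Kb b h) = Kb b (Kb a h) :=
      funext fun x => Kb_Kb_comm hKb hX (a.card + b.card) a b le_rfl
        (hne a (List.mem_cons_of_mem _ (List.mem_cons_self)))
        (hne b (List.mem_cons_self)) hba.symm h hh x
    rw [this]
  | trans p₁ p₂ ih₁ ih₂ =>
    intro h hh hd hne
    rw [ih₁ h hh hd hne, ih₂ h hh ((p₁.pairwise_iff fun h' => Disjoint.symm h').mp hd)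
      (fun A hA => hne A (p₁.mem_iff.mpr hA))]

omit hX hKb in
open Classical in
lemma empty_case (S : Finset (Fin n)) (π : Finpartition S) (hp : π.parts = ∅)
    (f : (Fin n → ℝ) → ℝ) (x : Fin n → ℝ) :
    blockExp μ X π.parts.toList f x
      = ∑ a ∈ Finset.univ.filter (· ≤ π),
          (a.parts.toList.foldl (fun g A => Kb A g) f) x := by
  have hS : S = ⊥ := Finpartition.parts_eq_empty_iff.mp hp
  subst hS
  have huniv : (Finset.univ.filter (· ≤ π) : Finset (Finpartition (⊥ : Finset (Fin n))))
      = {π} := by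
    ext a
    simp [Subsingleton.elim a π]
  rw [huniv, Finset.sum_singleton, hp, Finset.toList_empty]
  rfl

set_option maxHeartbeats 1000000 in
open Classical in
lemma main_lemma : ∀ (N : ℕ) (S : Finset (Fin n)), S.card ≤ N →
    ∀ (π : Finpartition S) (f : (Fin n → ℝ) → ℝ), Nice f → ∀ x,
    blockExp μ X π.parts.toList f x
      = ∑ a ∈ Finset.univ.filter (· ≤ π),
          (a.parts.toList.foldl (fun g A => Kb A g) f) x := by
  intro N
  induction N with
  | zero =>
    intro S hS π f hf x
    have : S = ∅ := Finset.card_eq_zero.mp (by omega)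
    exact empty_case S π (Finpartition.parts_eq_empty_iff.mpr this) f x
  | succ N ih =>
    intro S hS π f hf x
    by_cases hP : π.parts = ∅
    · exact empty_case S π hP f x
    obtain ⟨B, hBmem⟩ := Finset.nonempty_iff_ne_empty.mpr hP
    have hBne : B.Nonempty := Finpartition.nonempty_of_mem_parts _ hBmem
    have hBS : B ⊆ S := π.le hBmem
    have hcard : (S \ B).card ≤ N := by
      have h1 : B.card ≤ S.card := Finset.card_le_card hBS
      have h2 := Finset.card_sdiff_of_subset hBS
      have h3 : 1 ≤ B.card := Finset.card_pos.mpr hBne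
      omega
    set π' := erasePart π B hBmem with hπ'
    have hperm : π.parts.toList.Perm (B :: π'.parts.toList) := toList_erase_perm hBmem
    have hLHS1 : blockExp μ X π.parts.toList f = blockExp μ X (B :: π'.parts.toList) f :=
      blockExp_perm hX hperm f hf (toList_pairwise_disjoint π)
    have hIH : blockExp μ X π'.parts.toList f = fun y =>
        ∑ a' ∈ Finset.univ.filter (· ≤ π'),
          (a'.parts.toList.foldl (fun g A => Kb A g) f) y :=
      funext fun y => ih (S \ B) hcard π' f hf y
    have hnice_fold : ∀ {T'' : Finset (Fin n)} (a' : Finpartition T''),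
        Nice ((a'.parts.toList).foldl (fun g A => Kb A g) f) := fun a' =>
      foldl_nice (fun A hA h' hh' =>
        Kb_nice hKb hX (parts_nonempty' (Finset.mem_toList.mp hA)) hh') hf
    calc blockExp μ X π.parts.toList f x
        = blockExp μ X [B] (blockExp μ X π'.parts.toList f) x := by rw [hLHS1]; rfl
      _ = blockExp μ X [B] (fun y => ∑ a' ∈ Finset.univ.filter (· ≤ π'),
            (a'.parts.toList.foldl (fun g A => Kb A g) f) y) x := by rw [hIH]
      _ = ∑ a' ∈ Finset.univ.filter (· ≤ π'),
            blockExp μ X [B] ((a'.parts.toList).foldl (fun g A => Kb A g) f) x :=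
          blockExp_one_sum hX B _ _ (fun a' _ => hnice_fold a') x
      _ = ∑ a' ∈ Finset.univ.filter (· ≤ π'), ∑ β : Finpartition B,
            ((β.parts.toList).foldl (fun g A => Kb A g)
              ((a'.parts.toList).foldl (fun g A => Kb A g) f)) x :=
          Finset.sum_congr rfl fun a' _ => hKb B _ x
      _ = ∑ a' ∈ Finset.univ.filter (· ≤ π'), ∑ β : Finpartition B,
            ((a'.parts.toList ++ β.parts.toList).foldl (fun g A => Kb A g) f) x := by
          refine Finset.sum_congr rfl fun a' _ => Finset.sum_congr rfl fun β _ => ?_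
          rw [List.foldl_append]
      _ = ∑ p ∈ (Finset.univ.filter (· ≤ π')) ×ˢ (Finset.univ : Finset (Finpartition B)),
            ((p.1.parts.toList ++ p.2.parts.toList).foldl (fun g A => Kb A g) f) x :=
          (Finset.sum_product' (s := Finset.univ.filter (· ≤ π'))
            (t := (Finset.univ : Finset (Finpartition B)))
            (f := fun a' β =>
              List.foldl (fun g A => Kb A g) f (a'.parts.toList ++ β.parts.toList) x)).symm
      _ = ∑ a ∈ Finset.univ.filter (· ≤ π),
            ((a.parts.toList).foldl (fun g A => Kb A g) f) x := by
          refine Finset.sum_nbij'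
            (i := fun p => combinePart (π.le hBmem) p.2 p.1)
            (j := fun a => if ha : a ≤ π
              then (restrC π hBmem a ha, restrB π hBmem a ha)
              else (⊥, ⊥)) ?_ ?_ ?_ ?_ ?_
          · rintro ⟨a', β⟩ hp
            rw [Finset.mem_product, Finset.mem_filter] at hp
            exact Finset.mem_filter.mpr ⟨Finset.mem_univ _,
              combinePart_le π hBmem β a' hp.1.2⟩
          · intro a ha
            have haπ : a ≤ π := (Finset.mem_filter.mp ha).2
            rw [dif_pos haπ]
            rw [Finset.mem_product]
            exact ⟨Finset.mem_filter.mpr ⟨Finset.mem_univ _, restrC_le π hBmem a haπ⟩,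
              Finset.mem_univ _⟩
          · rintro ⟨a', β⟩ hp
            rw [Finset.mem_product, Finset.mem_filter] at hp
            have hle := combinePart_le π hBmem β a' hp.1.2
            dsimp only
            rw [dif_pos hle]
            exact Prod.ext (restrC_combine π hBmem β a' hp.1.2)
              (restrB_combine π hBmem β a' hp.1.2)
          · intro a ha
            have haπ : a ≤ π := (Finset.mem_filter.mp ha).2
            rw [dif_pos haπ]
            exact combine_restr π hBmem a haπ
          · rintro ⟨a', β⟩ hp
            have hperm2 : (combinePart (π.le hBmem) β a').parts.toList.Perm
                (a'.parts.toList ++ β.parts.toList) := by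
              rw [combinePart_parts]
              exact toList_union_perm (parts_disjoint_of_compl β a')
            have := foldl_perm hKb hX hperm2 f hf
              (toList_pairwise_disjoint _)
              (fun A hA => parts_nonempty' (Finset.mem_toList.mp hA))
            exact congrFun this.symm x

end Kb

end BlockCumulant

open Classical in
/-- For bounded measurable `f` whose arguments are partitioned by `π`, the
block-structured expectation is the sum of generalized cumulants over all
refinements of `π`: `E_π f = Σ_{α ≤ π} K_f(α)`. Here the single-block cumulant
operator `Kb` is characterized by its recursive defining property: for every block
`B` and function `h`, the joint expectation over `B` equals the sum over all
partitions `β` of `B` of the composite cumulant `K_h(β)` (the block operators of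
`β` applied successively to `h`), and `K_f(α)` is the successive application of
the block operators of `α` to `f`. -/
theorem block_expectation_eq_sum_cumulants_over_refinements
    {Ω : Type*} [MeasurableSpace Ω] (μ : Measure Ω) [IsProbabilityMeasure μ]
    (n : ℕ) (X : Fin n → Ω → ℝ) (hX : ∀ i, Measurable (X i))
    (f : (Fin n → ℝ) → ℝ) (hf : Measurable f) (C : ℝ) (hbdd : ∀ x, |f x| ≤ C)
    (Kb : Finset (Fin n) → ((Fin n → ℝ) → ℝ) → (Fin n → ℝ) → ℝ)
    (hKb : ∀ (B : Finset (Fin n)) (h : (Fin n → ℝ) → ℝ) (x : Fin n → ℝ),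
      blockExp μ X [B] h x =
        ∑ β : Finpartition B, (β.parts.toList.foldl (fun g A => Kb A g) h) x)
    (π : Finpartition (Finset.univ : Finset (Fin n))) :
    ∀ x : Fin n → ℝ,
      blockExp μ X π.parts.toList f x =
        ∑ α : Finpartition (Finset.univ : Finset (Fin n)),
          if α ≤ π then (α.parts.toList.foldl (fun g A => Kb A g) f) x else 0 := by
  intro x
  have hmain := BlockCumulant.main_lemma hKb hX
    (Finset.univ : Finset (Fin n)).card Finset.univ le_rfl π f ⟨hf, C, hbdd⟩ x
  rw [hmain, Finset.sum_filter]
end
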